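/- Two-procedure consistency (deterministic-sequence form of Corollary 7). Let p₀ be a probability density on a σ-finite measure space (Ω, μ), and for each n let q_{n,1} and q_{n,2} be probability densities with q_{n,1} > 0 almost everywhere on {p₀ > 0}. Write v_{n,j} = d_H(p₀, q_{n,j}) and s_n = V(p₀, q_{n,1}). Assume there exist constants M > 0 and C > 0 and a sequence ε_n → 0 such that for all n: (i) 0 < s_n < ∞; (ii) d_K(p₀, q_{n,1}) ≤ M v_{n,1}²; (iii) s_n ≤ C d_K(p₀, q_{n,1}) (i.e., V(p₀, q_{n,1}) = O(d_K(p₀, q_{n,1}))); (iv) v_{n,1} ≤ ε_n v_{n,2} (the first procedure is asymptotically better); and (v) n v_{n,2}² → ∞. Let X₁, …, Xₙ be i.i.d. with law P₀ = μ.withDensity p₀. Then P₀^n( ∏_{k=1}^n q_{n,1}(X_k) > ∏_{k=1}^n q_{n,2}(X_k) ) → 1 as n → ∞; that is, cross validation selects the asymptotically better procedure with probability tending to 1. -/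

import Mathlib

open MeasureTheory Real Filter

/-- A (probability) density on `(Ω, μ)`: a nonnegative measurable function integrating to 1. -/
def IsDensity {Ω : Type*} [MeasurableSpace Ω] (μ : Measure Ω) (p : Ω → ℝ) : Prop :=
  Measurable p ∧ (∀ x, 0 ≤ p x) ∧ Integrable p μ ∧ ∫ x, p x ∂μ = 1

/-- Squared Hellinger distance `d_H²(p, q) = ∫ (√p − √q)² dμ`. -/
noncomputable def hellSq {Ω : Type*} [MeasurableSpace Ω] (μ : Measure Ω) (p q : Ω → ℝ) : ℝ :=
  ∫ x, (Real.sqrt (p x) - Real.sqrt (q x)) ^ 2 ∂μ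

/-- Hellinger distance `d_H(p, q) = (∫ (√p − √q)² dμ)^{1/2}`. -/
noncomputable def hellDist {Ω : Type*} [MeasurableSpace Ω] (μ : Measure Ω) (p q : Ω → ℝ) : ℝ :=
  Real.sqrt (hellSq μ p q)

/-- Kullback–Leibler divergence `d_K(p, q) = ∫ p log(p/q) dμ`. -/
noncomputable def klD {Ω : Type*} [MeasurableSpace Ω] (μ : Measure Ω) (p q : Ω → ℝ) : ℝ :=
  ∫ x, p x * Real.log (p x / q x) ∂μ

/-- Second moment `V(p, q) = ∫ p (log(p/q))² dμ`. -/
noncomputable def klV {Ω : Type*} [MeasurableSpace Ω] (μ : Measure Ω) (p q : Ω → ℝ) : ℝ :=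
  ∫ x, p x * (Real.log (p x / q x)) ^ 2 ∂μ

/-!
Put `t = n d_H²(p₀, q_{n,2})`. Almost surely every `p₀(X_k)` and `q_{n,1}(X_k)` is positive, and
then `∏ q_{n,1}(X_k) = ∏ p₀(X_k) · exp (-S)` with `S = ∑ log (p₀ / q_{n,1})(X_k)`, while
`∏ q_{n,2}(X_k) = ∏ p₀(X_k) · W²` with `W = ∏ √(q_{n,2} / p₀)(X_k)`. So procedure 1 fails to
win only if `S ≥ t / 2` or `W ≥ exp (-t / 4)`. As `E W = (1 - d_H² / 2)ⁿ ≤ exp (-t / 2)`,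
Markov's inequality bounds the second event by `exp (-t / 4)`. As `E S = n d_K ≤ t / 4`
eventually and `Var S ≤ n V = O(ε_n² t)`, Chebyshev's inequality bounds the first by
`O(ε_n² / t)`.
-/

open ProbabilityTheory Topology

lemma prod_lt_prod_of_sum_log_div_lt {ι : Type*} [Fintype ι] {p q₁ q₂ : ι → ℝ} {a : ℝ}
    (hp : ∀ k, 0 < p k) (hq₁ : ∀ k, 0 < q₁ k) (hq₂ : ∀ k, 0 ≤ q₂ k)
    (hlog : ∑ k, log (p k / q₁ k) < 2 * a) (hsqrt : ∏ k, √(q₂ k / p k) < exp (-a)) :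
    ∏ k, q₂ k < ∏ k, q₁ k := by
  have h₁ : ∏ k, q₁ k = (∏ k, p k) * exp (-∑ k, log (p k / q₁ k)) := by
    rw [← Finset.sum_neg_distrib, exp_sum, ← Finset.prod_mul_distrib]
    refine Finset.prod_congr rfl fun k _ => ?_
    rw [exp_neg, exp_log (div_pos (hp k) (hq₁ k)), inv_div, mul_div_cancel₀ _ (hp k).ne']
  have h₂ : ∏ k, q₂ k = (∏ k, p k) * (∏ k, √(q₂ k / p k)) ^ 2 := by
    rw [← Finset.prod_pow, ← Finset.prod_mul_distrib]
    refine Finset.prod_congr rfl fun k _ => ?_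
    rw [sq_sqrt (div_nonneg (hq₂ k) (hp k).le), mul_div_cancel₀ _ (hp k).ne']
  rw [h₁, h₂]
  refine mul_lt_mul_of_pos_left ?_ (Finset.prod_pos fun k _ => hp k)
  calc (∏ k, √(q₂ k / p k)) ^ 2 < exp (-a) ^ 2 :=
        pow_lt_pow_left₀ hsqrt (Finset.prod_nonneg fun k _ => sqrt_nonneg _) two_ne_zero
    _ = exp (-(2 * a)) := by rw [← exp_nat_mul]; ring_nf
    _ < exp (-∑ k, log (p k / q₁ k)) := exp_lt_exp.2 (by linarith)

lemma mul_sqrt_div_eq_sqrt_mul {a b : ℝ} (ha : 0 ≤ a) : a * √(b / a) = √(a * b) := by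
  rcases ha.eq_or_lt with rfl | ha
  · simp
  · rw [sqrt_div' _ ha.le, mul_div_assoc', sqrt_mul ha.le, div_eq_iff (sqrt_pos.2 ha).ne']
    rw [mul_right_comm, mul_self_sqrt ha.le]

lemma sqrt_mul_le_add_div_two {a b : ℝ} (ha : 0 ≤ a) (hb : 0 ≤ b) : √(a * b) ≤ (a + b) / 2 := by
  rw [sqrt_mul ha]
  nlinarith [sq_nonneg (√a - √b), sq_sqrt ha, sq_sqrt hb]

section IidSample

variable {α ι : Type*} [MeasurableSpace α] [Fintype ι] {P : Measure α} [IsProbabilityMeasure P]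

lemma integral_sum_comp_eval {Y : α → ℝ} (hY : Integrable Y P) :
    ∫ x : ι → α, ∑ k, Y (x k) ∂Measure.pi (fun _ => P) = Fintype.card ι * ∫ ω, Y ω ∂P := by
  rw [integral_finsetSum _ fun k _ => integrable_comp_eval hY]
  simp [integral_comp_eval (μ := fun _ : ι => P) hY.aestronglyMeasurable]

lemma variance_sum_comp_eval_le {Y : α → ℝ} (hY : MemLp Y 2 P) :
    Var[fun x : ι → α => ∑ k, Y (x k); Measure.pi fun _ => P] ≤
      Fintype.card ι * ∫ ω, Y ω ^ 2 ∂P := by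
  have hsum : (fun x : ι → α => ∑ k, Y (x k)) = ∑ k : ι, fun x => Y (x k) := by
    ext; simp
  rw [hsum, variance_sum_pi fun _ => hY, Finset.sum_const, Finset.card_univ, nsmul_eq_mul]
  gcongr
  exact variance_le_expectation_sq hY.1

lemma measure_pi_le_sum_comp_eval {Y : α → ℝ} (hY : MemLp Y 2 P) {a : ℝ}
    (ha : Fintype.card ι * ∫ ω, Y ω ∂P < a) :
    Measure.pi (fun _ => P) {x : ι → α | a ≤ ∑ k, Y (x k)} ≤
      ENNReal.ofReal (Fintype.card ι * (∫ ω, Y ω ^ 2 ∂P) /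
        (a - (Fintype.card ι : ℝ) * ∫ ω, Y ω ∂P) ^ 2) := by
  have hS : MemLp (fun x : ι → α => ∑ k, Y (x k)) 2 (Measure.pi fun _ => P) :=
    memLp_finsetSum _ fun k _ => hY.comp_measurePreserving (measurePreserving_eval _ k)
  have hsub : {x : ι → α | a ≤ ∑ k, Y (x k)} ⊆ {x | a - (Fintype.card ι : ℝ) * ∫ ω, Y ω ∂P ≤
      |∑ k, Y (x k) - ∫ y : ι → α, ∑ k, Y (y k) ∂Measure.pi fun _ => P|} := by
    intro x hx
    rw [Set.mem_ofPred_eq, integral_sum_comp_eval (hY.integrable one_le_two)]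
    exact (sub_le_sub_right hx _).trans (le_abs_self _)
  refine (measure_mono hsub).trans ((meas_ge_le_variance_div_sq hS (sub_pos.2 ha)).trans ?_)
  gcongr
  exact variance_sum_comp_eval_le hY

lemma measure_pi_le_prod_comp_eval {g : α → ℝ} (hg₀ : ∀ ω, 0 ≤ g ω) (hg : Integrable g P)
    {c : ℝ} (hc : 0 < c) :
    Measure.pi (fun _ => P) {x : ι → α | c ≤ ∏ k, g (x k)} ≤
      ENNReal.ofReal ((∫ ω, g ω ∂P) ^ Fintype.card ι / c) := by
  have hmarkov := mul_meas_ge_le_integral_of_nonneg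
    (ae_of_all _ fun x : ι → α => Finset.prod_nonneg fun k _ => hg₀ (x k))
    (Integrable.fintype_prod fun _ => hg) c
  rw [integral_fintype_prod_eq_pow] at hmarkov
  rw [← ofReal_measureReal]
  exact ENNReal.ofReal_le_ofReal ((le_div_iff₀' hc).2 hmarkov)

end IidSample

section Density

variable {Ω : Type*} [MeasurableSpace Ω] {μ : Measure Ω} {p q q₁ q₂ : Ω → ℝ}

lemma integral_withDensity_ofReal (hp : Measurable p) (hp₀ : ∀ x, 0 ≤ p x) (g : Ω → ℝ) :
    ∫ x, g x ∂μ.withDensity (fun x => ENNReal.ofReal (p x)) = ∫ x, p x * g x ∂μ := by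
  rw [integral_withDensity_eq_integral_toReal_smul hp.ennreal_ofReal
    (ae_of_all _ fun _ => ENNReal.ofReal_lt_top)]
  simp [ENNReal.toReal_ofReal (hp₀ _)]

lemma integrable_withDensity_ofReal_iff (hp : Measurable p) (hp₀ : ∀ x, 0 ≤ p x)
    {g : Ω → ℝ} :
    Integrable g (μ.withDensity fun x => ENNReal.ofReal (p x)) ↔
      Integrable (fun x => p x * g x) μ := by
  rw [integrable_withDensity_iff_integrable_smul' hp.ennreal_ofReal
    (ae_of_all _ fun _ => ENNReal.ofReal_lt_top)]
  simp [ENNReal.toReal_ofReal (hp₀ _)]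

lemma ae_withDensity_ofReal_pos (hp : Measurable p) :
    ∀ᵐ x ∂μ.withDensity (fun x => ENNReal.ofReal (p x)), 0 < p x := by
  rw [ae_withDensity_iff hp.ennreal_ofReal]
  exact ae_of_all _ fun x hx => ENNReal.ofReal_pos.1 (pos_iff_ne_zero.2 hx)

lemma IsDensity.isProbabilityMeasure_withDensity (hp : IsDensity μ p) :
    IsProbabilityMeasure (μ.withDensity fun x => ENNReal.ofReal (p x)) := by
  obtain ⟨hpm, hp₀, hpi, hp₁⟩ := hp
  constructor
  rw [withDensity_apply _ MeasurableSet.univ, Measure.restrict_univ,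
    ← ofReal_integral_eq_lintegral_ofReal hpi (ae_of_all _ hp₀), hp₁, ENNReal.ofReal_one]

lemma hellSq_nonneg (μ : Measure Ω) (p q : Ω → ℝ) : 0 ≤ hellSq μ p q :=
  integral_nonneg fun _ => sq_nonneg _

lemma hellDist_sq (μ : Measure Ω) (p q : Ω → ℝ) : hellDist μ p q ^ 2 = hellSq μ p q :=
  sq_sqrt (hellSq_nonneg μ p q)

lemma IsDensity.integrable_sqrt_mul (hp : IsDensity μ p) (hq : IsDensity μ q) :
    Integrable (fun x => √(p x * q x)) μ :=
  ((hp.2.2.1.add hq.2.2.1).div_const 2).mono' (hp.1.mul hq.1).sqrt.aestronglyMeasurable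
    (ae_of_all _ fun x => by
      rw [norm_of_nonneg (sqrt_nonneg _)]
      exact sqrt_mul_le_add_div_two (hp.2.1 x) (hq.2.1 x))

lemma IsDensity.integral_sqrt_mul (hp : IsDensity μ p) (hq : IsDensity μ q) :
    ∫ x, √(p x * q x) ∂μ = 1 - hellSq μ p q / 2 := by
  have hsq : ∀ x, (√(p x) - √(q x)) ^ 2 = p x + q x - 2 * √(p x * q x) := fun x => by
    rw [sub_sq, sq_sqrt (hp.2.1 x), sq_sqrt (hq.2.1 x), sqrt_mul (hp.2.1 x)]
    ring
  have hpq : Integrable (fun x => p x + q x) μ := hp.2.2.1.add hq.2.2.1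
  have hint : hellSq μ p q = 2 - 2 * ∫ x, √(p x * q x) ∂μ := by
    rw [hellSq, funext hsq, integral_sub hpq
      ((hp.integrable_sqrt_mul hq).const_mul 2), integral_add hp.2.2.1 hq.2.2.1,
      integral_const_mul, hp.2.2.2, hq.2.2.2]
    ring
  linarith

lemma IsDensity.integral_sqrt_mul_le_exp (hp : IsDensity μ p) (hq : IsDensity μ q) :
    ∫ x, √(p x * q x) ∂μ ≤ exp (-(hellSq μ p q / 2)) := by
  rw [hp.integral_sqrt_mul hq]
  linarith [add_one_le_exp (-(hellSq μ p q / 2))]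

lemma IsDensity.measure_pi_exp_le_prod_sqrt_div (hp : IsDensity μ p) (hq : IsDensity μ q)
    (n : ℕ) :
    Measure.pi (fun _ : Fin n => μ.withDensity fun x => ENNReal.ofReal (p x))
        {x | exp (-(n * hellSq μ p q / 4)) ≤ ∏ k, √(q (x k) / p (x k))} ≤
      ENNReal.ofReal (exp (-(n * hellSq μ p q / 4))) := by
  have := hp.isProbabilityMeasure_withDensity
  have hmul : (fun x => p x * √(q x / p x)) = fun x => √(p x * q x) :=
    funext fun x => mul_sqrt_div_eq_sqrt_mul (hp.2.1 x)
  have hint : Integrable (fun x => √(q x / p x)) (μ.withDensity fun x => ENNReal.ofReal (p x)) := by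
    rw [integrable_withDensity_ofReal_iff hp.1 hp.2.1, hmul]
    exact hp.integrable_sqrt_mul hq
  refine (measure_pi_le_prod_comp_eval (fun _ => sqrt_nonneg _) hint (exp_pos _)).trans
    (ENNReal.ofReal_le_ofReal ?_)
  rw [Fintype.card_fin, integral_withDensity_ofReal hp.1 hp.2.1, hmul, div_le_iff₀ (exp_pos _)]
  calc (∫ x, √(p x * q x) ∂μ) ^ n ≤ exp (-(hellSq μ p q / 2)) ^ n :=
        pow_le_pow_left₀ (integral_nonneg fun _ => sqrt_nonneg _)
          (hp.integral_sqrt_mul_le_exp hq) n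
    _ = exp (-(n * hellSq μ p q / 4)) * exp (-(n * hellSq μ p q / 4)) := by
        rw [← exp_nat_mul, ← exp_add]; ring_nf

lemma IsDensity.measure_pi_le_sum_log_div (hp : IsDensity μ p) (hq : Measurable q)
    (hV : Integrable (fun x => p x * log (p x / q x) ^ 2) μ) {n : ℕ} {a : ℝ}
    (ha : n * klD μ p q < a) :
    Measure.pi (fun _ : Fin n => μ.withDensity fun x => ENNReal.ofReal (p x))
        {x | a ≤ ∑ k, log (p (x k) / q (x k))} ≤
      ENNReal.ofReal (n * klV μ p q / (a - n * klD μ p q) ^ 2) := by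
  have := hp.isProbabilityMeasure_withDensity
  have hY : MemLp (fun x => log (p x / q x)) 2 (μ.withDensity fun x => ENNReal.ofReal (p x)) := by
    have hm : Measurable fun x => log (p x / q x) := (hp.1.div hq).log
    rw [memLp_two_iff_integrable_sq hm.aestronglyMeasurable,
      integrable_withDensity_ofReal_iff hp.1 hp.2.1]
    exact hV
  have hklD : klD μ p q = ∫ x, log (p x / q x) ∂μ.withDensity fun x => ENNReal.ofReal (p x) :=
    (integral_withDensity_ofReal hp.1 hp.2.1 _).symm
  have hklV : klV μ p q = ∫ x, log (p x / q x) ^ 2 ∂μ.withDensity fun x => ENNReal.ofReal (p x) :=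
    (integral_withDensity_ofReal hp.1 hp.2.1 _).symm
  rw [hklD] at ha ⊢
  rw [hklV]
  simpa only [Fintype.card_fin] using
    measure_pi_le_sum_comp_eval (ι := Fin n) hY (by rwa [Fintype.card_fin])

lemma klV_nonneg (μ : Measure Ω) (hp : ∀ x, 0 ≤ p x) (q : Ω → ℝ) : 0 ≤ klV μ p q :=
  integral_nonneg fun x => mul_nonneg (hp x) (sq_nonneg _)

lemma IsDensity.measure_pi_compl_setOf_prod_lt_le (hp : IsDensity μ p) (hq₁ : Measurable q₁)
    (hpq₁ : ∀ᵐ x ∂μ, 0 < p x → 0 < q₁ x) (hq₂ : IsDensity μ q₂)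
    (hV : Integrable (fun x => p x * log (p x / q₁ x) ^ 2) μ) {n : ℕ}
    (ht : 0 < n * hellSq μ p q₂) (hK : n * klD μ p q₁ ≤ n * hellSq μ p q₂ / 4) :
    Measure.pi (fun _ : Fin n => μ.withDensity fun x => ENNReal.ofReal (p x))
        {x | ∏ k, q₂ (x k) < ∏ k, q₁ (x k)}ᶜ ≤
      ENNReal.ofReal (16 * (n * klV μ p q₁) / (n * hellSq μ p q₂) ^ 2) +
        ENNReal.ofReal (exp (-(n * hellSq μ p q₂ / 4))) := by
  have := hp.isProbabilityMeasure_withDensity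
  set P := μ.withDensity fun x => ENNReal.ofReal (p x)
  set t := n * hellSq μ p q₂
  have hpos : ∀ᵐ y ∂P, 0 < p y ∧ 0 < q₁ y := by
    filter_upwards [ae_withDensity_ofReal_pos hp.1,
      (withDensity_absolutelyContinuous μ _).ae_le hpq₁] with y hy hyq using ⟨hy, hyq hy⟩
  have hgood : ∀ᵐ x ∂Measure.pi (fun _ : Fin n => P), ∀ k, 0 < p (x k) ∧ 0 < q₁ (x k) :=
    eventually_all.2 fun k =>
      (Measure.tendsto_eval_ae_ae (μ := fun _ : Fin n => P) (i := k)).eventually hpos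
  have hsub : {x | ∏ k, q₂ (x k) < ∏ k, q₁ (x k)}ᶜ ≤ᵐ[Measure.pi fun _ : Fin n => P]
      ({x | t / 2 ≤ ∑ k, log (p (x k) / q₁ (x k))} ∪
        {x | exp (-(t / 4)) ≤ ∏ k, √(q₂ (x k) / p (x k))} : Set (Fin n → Ω)) := by
    filter_upwards [hgood] with x hx hxG
    refine (le_or_gt (t / 2) (∑ k, log (p (x k) / q₁ (x k)))).imp id fun hlog => ?_
    refine le_of_not_gt fun (hsqrt : _ < exp (-(t / 4))) => hxG ?_
    exact prod_lt_prod_of_sum_log_div_lt (fun k => (hx k).1) (fun k => (hx k).2)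
      (fun k => hq₂.2.1 _) (by linarith) hsqrt
  refine (measure_mono_ae hsub).trans ((measure_union_le _ _).trans (add_le_add ?_
    (hp.measure_pi_exp_le_prod_sqrt_div hq₂ n)))
  refine (hp.measure_pi_le_sum_log_div hq₁ hV (n := n) (a := t / 2) (by linarith)).trans
    (ENNReal.ofReal_le_ofReal ?_)
  have hgap : t / 4 ≤ t / 2 - n * klD μ p q₁ := by linarith
  calc n * klV μ p q₁ / (t / 2 - n * klD μ p q₁) ^ 2 ≤ n * klV μ p q₁ / (t / 4) ^ 2 := by
        gcongr
        exact mul_nonneg n.cast_nonneg (klV_nonneg μ hp.2.1 q₁)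
    _ = 16 * (n * klV μ p q₁) / t ^ 2 := by ring

lemma IsDensity.measure_pi_compl_setOf_prod_lt_le_of_klD_le (hp : IsDensity μ p)
    (hq₁ : Measurable q₁) (hpq₁ : ∀ᵐ x ∂μ, 0 < p x → 0 < q₁ x) (hq₂ : IsDensity μ q₂)
    (hV : Integrable (fun x => p x * log (p x / q₁ x) ^ 2) μ) {n : ℕ} {r C : ℝ}
    (hC : 0 ≤ C) (hr : r ≤ 1 / 4) (hK : klD μ p q₁ ≤ r * hellSq μ p q₂)
    (hVK : klV μ p q₁ ≤ C * klD μ p q₁) (ht : 0 < n * hellSq μ p q₂) :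
    Measure.pi (fun _ : Fin n => μ.withDensity fun x => ENNReal.ofReal (p x))
        {x | ∏ k, q₂ (x k) < ∏ k, q₁ (x k)}ᶜ ≤
      ENNReal.ofReal (16 * C * r / (n * hellSq μ p q₂)) +
        ENNReal.ofReal (exp (-(n * hellSq μ p q₂ / 4))) := by
  have hnK : n * klD μ p q₁ ≤ n * hellSq μ p q₂ / 4 :=
    calc n * klD μ p q₁ ≤ n * (r * hellSq μ p q₂) := by gcongr
      _ ≤ n * (1 / 4 * hellSq μ p q₂) := by gcongr; exact hellSq_nonneg _ _ _
      _ = n * hellSq μ p q₂ / 4 := by ring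
  have hnV : n * klV μ p q₁ ≤ C * r * (n * hellSq μ p q₂) :=
    calc n * klV μ p q₁ ≤ n * (C * (r * hellSq μ p q₂)) := by gcongr; exact hVK.trans (by gcongr)
      _ = C * r * (n * hellSq μ p q₂) := by ring
  refine (hp.measure_pi_compl_setOf_prod_lt_le hq₁ hpq₁ hq₂ hV ht hnK).trans
    (add_le_add_left (ENNReal.ofReal_le_ofReal ?_) _)
  rw [div_le_div_iff₀ (by positivity) ht]
  nlinarith

end Density

lemma tendsto_measure_one_of_tendsto_measure_compl {β : ℕ → Type*} [∀ n, MeasurableSpace (β n)]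
    {ν : ∀ n, Measure (β n)} [∀ n, IsProbabilityMeasure (ν n)] {s : ∀ n, Set (β n)}
    (h : Tendsto (fun n => ν n (s n)ᶜ) atTop (𝓝 0)) :
    Tendsto (fun n => ν n (s n)) atTop (𝓝 1) := by
  have hlow : Tendsto (fun n => 1 - ν n (s n)ᶜ) atTop (𝓝 1) := by
    simpa using ENNReal.Tendsto.sub tendsto_const_nhds h (Or.inl ENNReal.one_ne_top)
  refine tendsto_of_tendsto_of_tendsto_of_le_of_le hlow tendsto_const_nhds (fun n => ?_)
    fun n => prob_le_one
  have hunion := measure_univ_le_add_compl (μ := ν n) (s n)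
  rwa [measure_univ, ← tsub_le_iff_right] at hunion

theorem cv_two_procedure_consistency_general {Ω : Type*} [MeasurableSpace Ω]
    (μ : Measure Ω) (p₀ : Ω → ℝ)
    (hp₀ : IsDensity μ p₀)
    (q₁ q₂ : ℕ → Ω → ℝ)
    (hq₁ : ∀ n, IsDensity μ (q₁ n)) (hq₂ : ∀ n, IsDensity μ (q₂ n))
    (hq₁pos : ∀ n, ∀ᵐ x ∂μ, 0 < p₀ x → 0 < q₁ n x)
    (hVint : ∀ n, Integrable (fun x => p₀ x * (Real.log (p₀ x / q₁ n x)) ^ 2) μ)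
    (M C : ℝ) (hM : 0 < M) (hC : 0 < C)
    (ε : ℕ → ℝ) (hε : Tendsto ε atTop (nhds 0))
    -- (ii) d_K(p₀, q_{n,1}) ≤ M v_{n,1}²
    (hii : ∀ n, klD μ p₀ (q₁ n) ≤ M * hellDist μ p₀ (q₁ n) ^ 2)
    -- (iii) s_n ≤ C d_K(p₀, q_{n,1})
    (hiii : ∀ n, klV μ p₀ (q₁ n) ≤ C * klD μ p₀ (q₁ n))
    -- (iv) v_{n,1} ≤ ε_n v_{n,2}
    (hiv : ∀ n, hellDist μ p₀ (q₁ n) ≤ ε n * hellDist μ p₀ (q₂ n))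
    -- (v) n v_{n,2}² → ∞
    (hv : Tendsto (fun n : ℕ => (n : ℝ) * hellDist μ p₀ (q₂ n) ^ 2) atTop atTop)
    (P₀ : Measure Ω)
    (hP₀ : P₀ = μ.withDensity fun x => ENNReal.ofReal (p₀ x)) :
    Tendsto (fun n : ℕ =>
        (Measure.pi fun _ : Fin n => P₀)
          {x : Fin n → Ω | ∏ k : Fin n, q₂ n (x k) < ∏ k : Fin n, q₁ n (x k)})
      atTop (nhds 1) := by
  have := hp₀.isProbabilityMeasure_withDensity
  subst hP₀
  set t : ℕ → ℝ := fun n => n * hellSq μ p₀ (q₂ n)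
  have ht : Tendsto t atTop atTop := by simpa only [hellDist_sq] using hv
  have hK : ∀ n, klD μ p₀ (q₁ n) ≤ M * ε n ^ 2 * hellSq μ p₀ (q₂ n) := fun n => by
    rw [mul_assoc, ← hellDist_sq, ← mul_pow]
    exact (hii n).trans (by gcongr; exacts [sqrt_nonneg _, hiv n])
  have hMε : Tendsto (fun n => M * ε n ^ 2) atTop (𝓝 0) := by
    simpa using (hε.pow 2).const_mul M
  have hlim : Tendsto (fun n => ENNReal.ofReal (16 * C * (M * ε n ^ 2) / t n) +
      ENNReal.ofReal (exp (-(t n / 4)))) atTop (𝓝 0) := by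
    have h₁ : Tendsto (fun n => 16 * C * (M * ε n ^ 2) / t n) atTop (𝓝 0) := by
      simpa [div_eq_mul_inv] using (hMε.const_mul (16 * C)).mul (tendsto_inv_atTop_zero.comp ht)
    have h₂ : Tendsto (fun n => exp (-(t n / 4))) atTop (𝓝 0) :=
      tendsto_exp_atBot.comp (tendsto_neg_atTop_atBot.comp (ht.atTop_div_const (by norm_num)))
    simpa using (ENNReal.tendsto_ofReal h₁).add (ENNReal.tendsto_ofReal h₂)
  refine tendsto_measure_one_of_tendsto_measure_compl (tendsto_of_tendsto_of_tendsto_of_le_of_le'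
    tendsto_const_nhds hlim (Eventually.of_forall fun _ => zero_le) ?_)
  filter_upwards [ht.eventually_gt_atTop 0,
    hMε.eventually_le_const (by norm_num : (0 : ℝ) < 1 / 4)] with n htn hεn
  exact hp₀.measure_pi_compl_setOf_prod_lt_le_of_klD_le (hq₁ n).1 (hq₁pos n) (hq₂ n) (hVint n)
    hC.le hεn (hK n) (hiii n) htn

/-- Two-procedure consistency (deterministic-sequence form of Corollary 7): if procedure 1 is
asymptotically better than procedure 2 (in Hellinger distance) and `n v_{n,2}² → ∞`, then cross
validation selects procedure 1 with probability tending to 1. -/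
theorem cv_two_procedure_consistency {Ω : Type*} [MeasurableSpace Ω]
    (μ : Measure Ω) [SigmaFinite μ] (p₀ : Ω → ℝ)
    (hp₀ : IsDensity μ p₀)
    (q₁ q₂ : ℕ → Ω → ℝ)
    (hq₁ : ∀ n, IsDensity μ (q₁ n)) (hq₂ : ∀ n, IsDensity μ (q₂ n))
    (hq₁pos : ∀ n, ∀ᵐ x ∂μ, 0 < p₀ x → 0 < q₁ n x)
    (hVint : ∀ n, Integrable (fun x => p₀ x * (Real.log (p₀ x / q₁ n x)) ^ 2) μ)
    (M C : ℝ) (hM : 0 < M) (hC : 0 < C)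
    (ε : ℕ → ℝ) (hε : Tendsto ε atTop (nhds 0))
    -- (i) 0 < s_n < ∞ (finiteness is the integrability hypothesis `hVint`)
    (hi : ∀ n, 0 < klV μ p₀ (q₁ n))
    -- (ii) d_K(p₀, q_{n,1}) ≤ M v_{n,1}²
    (hii : ∀ n, klD μ p₀ (q₁ n) ≤ M * hellDist μ p₀ (q₁ n) ^ 2)
    -- (iii) s_n ≤ C d_K(p₀, q_{n,1})
    (hiii : ∀ n, klV μ p₀ (q₁ n) ≤ C * klD μ p₀ (q₁ n))
    -- (iv) v_{n,1} ≤ ε_n v_{n,2}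
    (hiv : ∀ n, hellDist μ p₀ (q₁ n) ≤ ε n * hellDist μ p₀ (q₂ n))
    -- (v) n v_{n,2}² → ∞
    (hv : Tendsto (fun n : ℕ => (n : ℝ) * hellDist μ p₀ (q₂ n) ^ 2) atTop atTop)
    (P₀ : Measure Ω) [IsProbabilityMeasure P₀]
    (hP₀ : P₀ = μ.withDensity fun x => ENNReal.ofReal (p₀ x)) :
    Tendsto (fun n : ℕ =>
        (Measure.pi fun _ : Fin n => P₀)
          {x : Fin n → Ω | ∏ k : Fin n, q₂ n (x k) < ∏ k : Fin n, q₁ n (x k)})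
      atTop (nhds 1) :=
  cv_two_procedure_consistency_general μ p₀ hp₀ q₁ q₂ hq₁ hq₂ hq₁pos hVint M C hM hC ε hε hii hiii
    hiv hv P₀ hP₀
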